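/- Let (T, B) and (T̃, B̃) be regular boundary problems with signal operators G, G̃ and state operators H, H̃. Then the state operator of the product (T T̃, B·T̃ + B̃) sends boundary data decomposed as B₀ + B̃₀ (with B₀ supported on B·T̃ and B̃₀ on B̃) to u = G̃ H(B₀ ∘ T̃*^{-1}) + H̃(B̃₀); i.e., u satisfies T T̃ u = 0, β(T̃ u) = B₀(β∘T̃) for all β ∈ B, and β̃(u) = B̃₀(β̃) for all β̃ ∈ B̃. -/

import Mathlib

/-- The trace map `V → C*` sending `v` to the functional `γ ↦ γ(v)`. -/
noncomputable def trc {K V : Type*} [Field K] [AddCommGroup V] [Module K V]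
    (C : Submodule K (Module.Dual K V)) : V →ₗ[K] Module.Dual K C :=
  (C.subtype.dualMap).comp (Module.Dual.eval K V)

/-!
Since `T̃ G̃ = id` and `T̃ H̃ = 0`, the element `T̃ u` is just `H(B₀)`, so the conditions involving
`T` and `B` are those of the state operator `H`. The conditions on `B̃` hold because the signal
`G̃ H(B₀)` lies in `B̃^⊥` and is thus invisible to every `β̃ ∈ B̃`, leaving `β̃(H̃ B̃₀) = B̃₀(β̃)`.
-/

namespace LinearMap

variable {R V W : Type*} [Semiring R] [AddCommMonoid V] [Module R V] [AddCommMonoid W]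
  [Module R W]

theorem apply_rightInverse_add_of_apply_eq_zero {f : V →ₗ[R] W} {g : W →ₗ[R] V}
    (hfg : f.comp g = id) (w : W) {v : V} (hv : f v = 0) : f (g w + v) = w := by
  rw [map_add, hv, add_zero, ← comp_apply, hfg, id_apply]

end LinearMap

namespace Submodule

variable {R V : Type*} [CommSemiring R] [AddCommMonoid V] [Module R V]

theorem dual_apply_add_of_mem_dualCoannihilator {C : Submodule R (Module.Dual R V)} {x : V}
    (hx : x ∈ C.dualCoannihilator) {φ : Module.Dual R V} (hφ : φ ∈ C) (v : V) :
    φ (x + v) = φ v := by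
  rw [map_add, (mem_dualCoannihilator x).mp hx φ hφ, zero_add]

end Submodule

theorem product_state_operator_general
    {K F 𝒢 ℋ : Type*} [Field K]
    [AddCommGroup F] [Module K F] [AddCommGroup 𝒢] [Module K 𝒢]
    [AddCommGroup ℋ] [Module K ℋ]
    (T' : F →ₗ[K] 𝒢)
    (T : 𝒢 →ₗ[K] ℋ)
    (B : Submodule K (Module.Dual K 𝒢)) (B' : Submodule K (Module.Dual K F))
    -- signal operator of (T', B')
    (G' : 𝒢 →ₗ[K] F) (hG'1 : T'.comp G' = LinearMap.id)
    (hG'2 : LinearMap.range G' = B'.dualCoannihilator)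
    -- state operator of (T, B)
    (H : ↥(LinearMap.range (trc B)) →ₗ[K] 𝒢)
    (hH : ∀ b : ↥(LinearMap.range (trc B)),
      T (H b) = 0 ∧ ∀ β : B, (β : Module.Dual K 𝒢) (H b) = (b : Module.Dual K B) β)
    -- state operator of (T', B')
    (H' : ↥(LinearMap.range (trc B')) →ₗ[K] F)
    (hH' : ∀ b : ↥(LinearMap.range (trc B')),
      T' (H' b) = 0 ∧ ∀ β : B', (β : Module.Dual K F) (H' b) = (b : Module.Dual K B') β) :
    ∀ (b : ↥(LinearMap.range (trc B))) (b' : ↥(LinearMap.range (trc B'))),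
      T (T' (G' (H b) + H' b')) = 0 ∧
      (∀ β : B, (β : Module.Dual K 𝒢) (T' (G' (H b) + H' b')) = (b : Module.Dual K B) β) ∧
      (∀ β : B', (β : Module.Dual K F) (G' (H b) + H' b') = (b' : Module.Dual K B') β) := by
  intro b b'
  have hT'u : T' (G' (H b) + H' b') = H b :=
    LinearMap.apply_rightInverse_add_of_apply_eq_zero hG'1 (H b) (hH' b').1
  have hsignal : G' (H b) ∈ B'.dualCoannihilator := hG'2 ▸ LinearMap.mem_range_self G' (H b)
  refine ⟨?_, fun β ↦ ?_, fun β ↦ ?_⟩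
  · rw [hT'u]; exact (hH b).1
  · rw [hT'u]; exact (hH b).2 β
  · rw [Submodule.dual_apply_add_of_mem_dualCoannihilator hsignal β.2, (hH' b').2 β]

theorem product_state_operator
    {K F 𝒢 ℋ : Type*} [Field K]
    [AddCommGroup F] [Module K F] [AddCommGroup 𝒢] [Module K 𝒢]
    [AddCommGroup ℋ] [Module K ℋ]
    (T' : F →ₗ[K] 𝒢) (hT' : Function.Surjective T')
    (T : 𝒢 →ₗ[K] ℋ) (hT : Function.Surjective T)
    (B : Submodule K (Module.Dual K 𝒢)) (B' : Submodule K (Module.Dual K F))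
    (hcl : B.dualCoannihilator.dualAnnihilator = B)
    (hcl' : B'.dualCoannihilator.dualAnnihilator = B')
    (hreg : IsCompl (LinearMap.ker T) B.dualCoannihilator)
    (hreg' : IsCompl (LinearMap.ker T') B'.dualCoannihilator)
    -- signal operator of (T', B')
    (G' : 𝒢 →ₗ[K] F) (hG'1 : T'.comp G' = LinearMap.id)
    (hG'2 : LinearMap.range G' = B'.dualCoannihilator)
    -- state operator of (T, B)
    (H : ↥(LinearMap.range (trc B)) →ₗ[K] 𝒢)
    (hH : ∀ b : ↥(LinearMap.range (trc B)),
      T (H b) = 0 ∧ ∀ β : B, (β : Module.Dual K 𝒢) (H b) = (b : Module.Dual K B) β)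
    -- state operator of (T', B')
    (H' : ↥(LinearMap.range (trc B')) →ₗ[K] F)
    (hH' : ∀ b : ↥(LinearMap.range (trc B')),
      T' (H' b) = 0 ∧ ∀ β : B', (β : Module.Dual K F) (H' b) = (b : Module.Dual K B') β) :
    ∀ (b : ↥(LinearMap.range (trc B))) (b' : ↥(LinearMap.range (trc B'))),
      T (T' (G' (H b) + H' b')) = 0 ∧
      (∀ β : B, (β : Module.Dual K 𝒢) (T' (G' (H b) + H' b')) = (b : Module.Dual K B) β) ∧
      (∀ β : B', (β : Module.Dual K F) (G' (H b) + H' b') = (b' : Module.Dual K B') β) :=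
  product_state_operator_general T' T B B' G' hG'1 hG'2 H hH H' hH'
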